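/- arXiv:1707.05718 — 2 statements merged into one kernel-verified Lean document; each statement's English description precedes it below -/
import Mathlib

section
/- (Duality principle.) For all closed terms P, Q ∈ S_A, EqFSCL ⊢ P = Q if and only if EqFSCL ⊢ P^dl = Q^dl. -/
/-!
The dual is expressible inside EqFSCL: by De Morgan (F2, F3) and `F = ¬T` (F1), the dual of `P`
is provably equal to the negation of `P` with every atom `a` replaced by `¬a`. Derivability is
closed under substitution of atoms (the axioms are schemes) and under `¬`, so `P = Q` yields
`P^dl = Q^dl`; the converse follows because dualization is an involution.
-/

/-- Closed sequential propositional statements over `A`: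
`P ::= a | T | F | ¬P | P ∧❛ P | P ∨❛ P`. -/
inductive STerm (A : Type) : Type
  | atom : A → STerm A
  | tt : STerm A
  | ff : STerm A
  | neg : STerm A → STerm A
  | and : STerm A → STerm A → STerm A
  | or : STerm A → STerm A → STerm A

/-- Derivability from the axiom set EqFSCL: the least congruence (w.r.t. `¬`, `∧❛`, `∨❛`)
on closed terms containing all closed substitution instances of the axioms (F1)-(F10). -/
inductive EqFSCL {A : Type} : STerm A → STerm A → Prop
  | refl (P) : EqFSCL P P
  | symm {P Q} : EqFSCL P Q → EqFSCL Q P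
  | trans {P Q R} : EqFSCL P Q → EqFSCL Q R → EqFSCL P R
  | neg_congr {P Q} : EqFSCL P Q → EqFSCL (.neg P) (.neg Q)
  | and_congr {P P' Q Q'} : EqFSCL P Q → EqFSCL P' Q' → EqFSCL (.and P P') (.and Q Q')
  | or_congr {P P' Q Q'} : EqFSCL P Q → EqFSCL P' Q' → EqFSCL (.or P P') (.or Q Q')
  | F1 : EqFSCL .ff (.neg .tt)
  | F2 (x y) : EqFSCL (.or x y) (.neg (.and (.neg x) (.neg y)))
  | F3 (x) : EqFSCL (.neg (.neg x)) x
  | F4 (x) : EqFSCL (.and .tt x) x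
  | F5 (x) : EqFSCL (.or x .ff) x
  | F6 (x) : EqFSCL (.and .ff x) .ff
  | F7 (x y z) : EqFSCL (.and (.and x y) z) (.and x (.and y z))
  | F8 (x) : EqFSCL (.and (.neg x) .ff) (.and x .ff)
  | F9 (x y) : EqFSCL (.or (.and x .ff) y) (.and (.or x .tt) y)
  | F10 (x y z) : EqFSCL (.or (.and x y) (.and z .ff))
      (.and (.or x (.and z .ff)) (.or y (.and z .ff)))

/-- The dual `P^dl` of a closed term `P`. -/
def STerm.dual {A : Type} : STerm A → STerm A
  | .atom a => .atom a
  | .tt => .ff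
  | .ff => .tt
  | .neg P => .neg P.dual
  | .and P Q => .or P.dual Q.dual
  | .or P Q => .and P.dual Q.dual

namespace STerm

variable {A B : Type}

def subst (σ : A → STerm B) : STerm A → STerm B
  | atom a => σ a
  | tt => tt
  | ff => ff
  | neg P => neg (P.subst σ)
  | and P Q => and (P.subst σ) (Q.subst σ)
  | or P Q => or (P.subst σ) (Q.subst σ)

theorem dual_dual (P : STerm A) : P.dual.dual = P := by
  induction P <;> simp only [dual, *]

theorem eqFSCL_dual_neg_subst_neg (P : STerm A) :
    EqFSCL P.dual (neg (P.subst fun a => neg (atom a))) := by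
  induction P with
  | atom a => exact .symm (.F3 _)
  | tt => exact .F1
  | ff => exact .trans (.symm (.F3 _)) (.neg_congr (.symm .F1))
  | neg P ih => exact .neg_congr ih
  | and P Q ihP ihQ =>
      exact .trans (.F2 _ _) (.neg_congr (.and_congr
        (.trans (.neg_congr ihP) (.F3 _)) (.trans (.neg_congr ihQ) (.F3 _))))
  | or P Q ihP ihQ =>
      exact .trans (.and_congr ihP ihQ) (.symm (.trans (.neg_congr (.F2 _ _)) (.F3 _)))

end STerm

namespace EqFSCL

variable {A B : Type}

theorem subst {P Q : STerm A} (σ : A → STerm B) (h : EqFSCL P Q) :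
    EqFSCL (P.subst σ) (Q.subst σ) := by
  induction h with
  | refl P => exact .refl _
  | symm _ ih => exact .symm ih
  | trans _ _ ih₁ ih₂ => exact .trans ih₁ ih₂
  | neg_congr _ ih => exact .neg_congr ih
  | and_congr _ _ ih₁ ih₂ => exact .and_congr ih₁ ih₂
  | or_congr _ _ ih₁ ih₂ => exact .or_congr ih₁ ih₂
  | F1 => exact .F1
  | F2 => exact .F2 _ _
  | F3 => exact .F3 _
  | F4 => exact .F4 _
  | F5 => exact .F5 _
  | F6 => exact .F6 _
  | F7 => exact .F7 _ _ _
  | F8 => exact .F8 _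
  | F9 => exact .F9 _ _
  | F10 => exact .F10 _ _ _

theorem dual {P Q : STerm A} (h : EqFSCL P Q) : EqFSCL P.dual Q.dual :=
  .trans P.eqFSCL_dual_neg_subst_neg <|
    .trans (.neg_congr (h.subst _)) (.symm Q.eqFSCL_dual_neg_subst_neg)

end EqFSCL

theorem eqFSCL_duality_general {A : Type} (P Q : STerm A) :
    EqFSCL P Q ↔ EqFSCL P.dual Q.dual :=
  ⟨EqFSCL.dual, fun h => by simpa only [STerm.dual_dual] using h.dual⟩

/-- Duality principle: `EqFSCL ⊢ P = Q` iff `EqFSCL ⊢ P^dl = Q^dl`. -/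
theorem eqFSCL_duality {A : Type} [Nonempty A] (P Q : STerm A) :
    EqFSCL P Q ↔ EqFSCL P.dual Q.dual :=
  eqFSCL_duality_general P Q
end

section
/- For all closed terms P, Q, R ∈ S_A, EqFSCL ⊢ (P ∨❛ Q) ∧❛ (R ∧❛ F) = (¬P ∨❛ (R ∧❛ F)) ∧❛ (Q ∧❛ (R ∧❛ F)). -/
local infix:50 " ≐ " => EqFSCL

namespace EqFSCL

variable {A : Type}

instance : Trans (@EqFSCL A) (@EqFSCL A) (@EqFSCL A) := ⟨EqFSCL.trans⟩

theorem neg_and (x y : STerm A) : .neg (.and x y) ≐ .or (.neg x) (.neg y) :=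
  .symm (.trans (.F2 _ _) (.neg_congr (.and_congr (.F3 x) (.F3 y))))

theorem neg_and_neg (x y : STerm A) : .neg (.and x (.neg y)) ≐ .or (.neg x) y :=
  .trans (neg_and _ _) (.or_congr (.refl _) (.F3 y))

theorem neg_or (x y : STerm A) : .neg (.or x y) ≐ .and (.neg x) (.neg y) :=
  .trans (.neg_congr (.F2 x y)) (.F3 _)

theorem or_tt (x : STerm A) : .or x .tt ≐ .neg (.and x .ff) :=
  .trans (.F2 x .tt) (.neg_congr (.trans (.and_congr (.refl _) (.symm .F1)) (.F8 x)))

theorem and_ff_eq_or_tt_and_ff (x : STerm A) : .and x .ff ≐ .and (.or x .tt) .ff :=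
  .trans (.symm (.F5 _)) (.F9 x .ff)

theorem and_and_ff (x z : STerm A) :
    .and x (.and z .ff) ≐ .and (.and x (.neg (.and z .ff))) .ff :=
  calc .and x (.and z .ff)
      _ ≐ .and x (.and (.or z .tt) .ff) := .and_congr (.refl _) (and_ff_eq_or_tt_and_ff z)
      _ ≐ .and (.and x (.or z .tt)) .ff := .symm (.F7 _ _ _)
      _ ≐ .and (.and x (.neg (.and z .ff))) .ff :=
        .and_congr (.and_congr (.refl _) (or_tt z)) (.refl _)

theorem or_and_ff (x y : STerm A) : .and (.or x y) .ff ≐ .and (.neg x) (.and y .ff) :=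
  calc .and (.or x y) .ff
      _ ≐ .and (.neg (.or x y)) .ff := .symm (.F8 _)
      _ ≐ .and (.and (.neg x) (.neg y)) .ff := .and_congr (neg_or x y) (.refl _)
      _ ≐ .and (.neg x) (.and (.neg y) .ff) := .F7 _ _ _
      _ ≐ .and (.neg x) (.and y .ff) := .and_congr (.refl _) (.F8 y)

/-- The De Morgan dual of (F10). -/
theorem or_and_neg_and_ff (x y z : STerm A) :
    .and (.or x y) (.neg (.and z .ff)) ≐
      .or (.and x (.neg (.and z .ff))) (.and y (.neg (.and z .ff))) := by
  have neg_or_neg (u : STerm A) :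
      .neg (.or (.neg u) (.and z .ff)) ≐ .and u (.neg (.and z .ff)) :=
    .trans (neg_or _ _) (.and_congr (.F3 u) (.refl _))
  calc .and (.or x y) (.neg (.and z .ff))
      _ ≐ .neg (.or (.and (.neg x) (.neg y)) (.and z .ff)) :=
        .trans (.symm (.F3 _)) (.neg_congr (.trans (neg_and _ _) (.or_congr (neg_or x y) (.F3 _))))
      _ ≐ .neg (.and (.or (.neg x) (.and z .ff)) (.or (.neg y) (.and z .ff))) :=
        .neg_congr (.F10 _ _ _)
      _ ≐ .or (.and x (.neg (.and z .ff))) (.and y (.neg (.and z .ff))) :=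
        .trans (neg_and _ _) (.or_congr (neg_or_neg x) (neg_or_neg y))

end EqFSCL

theorem eqFSCL_seqs_general {A : Type} (P Q R : STerm A) :
    EqFSCL (.and (.or P Q) (.and R .ff))
      (.and (.or (.neg P) (.and R .ff)) (.and Q (.and R .ff))) :=
  calc .and (.or P Q) (.and R .ff)
      _ ≐ .and (.and (.or P Q) (.neg (.and R .ff))) .ff := EqFSCL.and_and_ff _ _
      _ ≐ .and (.or (.and P (.neg (.and R .ff))) (.and Q (.neg (.and R .ff)))) .ff :=
        .and_congr (EqFSCL.or_and_neg_and_ff P Q R) (.refl _)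
      _ ≐ .and (.neg (.and P (.neg (.and R .ff)))) (.and (.and Q (.neg (.and R .ff))) .ff) :=
        EqFSCL.or_and_ff _ _
      _ ≐ .and (.or (.neg P) (.and R .ff)) (.and Q (.and R .ff)) :=
        .and_congr (EqFSCL.neg_and_neg _ _) (.symm (EqFSCL.and_and_ff Q R))

/-- `EqFSCL ⊢ (P ∨❛ Q) ∧❛ (R ∧❛ F) = (¬P ∨❛ (R ∧❛ F)) ∧❛ (Q ∧❛ (R ∧❛ F))`. -/
theorem eqFSCL_seqs {A : Type} [Nonempty A] (P Q R : STerm A) :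
    EqFSCL (.and (.or P Q) (.and R .ff))
      (.and (.or (.neg P) (.and R .ff)) (.and Q (.and R .ff))) :=
  eqFSCL_seqs_general P Q R
end
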